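/- arXiv:1409.4142 — 2 statements merged into one kernel-verified Lean document; each statement's English description precedes it below -/
import Mathlib

section
/- The spherical growth series of the graph monoid M(Γ) equals 1/p_Γ(-t) as a formal power series, where p_Γ is the clique polynomial of Γ. -/
open scoped Classical

variable {V : Type*} {M : Type*} {G : Type*}

noncomputable def mlen [Monoid M] (f : V → M) (x : M) : ℕ :=
  sInf {n | ∃ w : List V, (w.map f).prod = x ∧ w.length = n}

def mtype [Monoid M] (f : V → M) (x : M) : Set V :=
  {i | ∃ w : List V, (w.map f).prod = x ∧ w.length = mlen f x ∧ w.getLast? = some i}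

def geval [Group G] (f : V → G) : V × Bool → G := fun l => if l.2 then f l.1 else (f l.1)⁻¹

noncomputable def glen [Group G] (f : V → G) (x : G) : ℕ :=
  sInf {n | ∃ w : List (V × Bool), (w.map (geval f)).prod = x ∧ w.length = n}

def gtype [Group G] (f : V → G) (x : G) : Set V :=
  {i | ∃ w : List (V × Bool), (w.map (geval f)).prod = x ∧ w.length = glen f x ∧
    w.getLast?.map Prod.fst = some i}

def graphMonoidRel (Γ : SimpleGraph V) : FreeMonoid V → FreeMonoid V → Prop :=
  fun a b => ∃ i j, Γ.Adj i j ∧ a = FreeMonoid.of i * FreeMonoid.of j ∧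
    b = FreeMonoid.of j * FreeMonoid.of i

abbrev GraphMonoid (Γ : SimpleGraph V) := (conGen (graphMonoidRel Γ)).Quotient

def GraphMonoid.gen (Γ : SimpleGraph V) (i : V) : GraphMonoid Γ :=
  (conGen (graphMonoidRel Γ)).mk' (FreeMonoid.of i)

def raagRels (Γ : SimpleGraph V) : Set (FreeGroup V) :=
  {r | ∃ i j, Γ.Adj i j ∧
    r = FreeGroup.of i * FreeGroup.of j * (FreeGroup.of i)⁻¹ * (FreeGroup.of j)⁻¹}

abbrev RAAG (Γ : SimpleGraph V) := PresentedGroup (raagRels Γ)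

def RAAG.gen (Γ : SimpleGraph V) (i : V) : RAAG Γ := PresentedGroup.of i

def racgRels (Γ : SimpleGraph V) : Set (FreeGroup V) :=
  raagRels Γ ∪ {r | ∃ i, r = FreeGroup.of i * FreeGroup.of i}

abbrev RACG (Γ : SimpleGraph V) := PresentedGroup (racgRels Γ)

def RACG.gen (Γ : SimpleGraph V) (i : V) : RACG Γ := PresentedGroup.of i

noncomputable def cliquePoly [Fintype V] (Γ : SimpleGraph V) : Polynomial ℚ :=
  ∑ k ∈ Finset.range (Fintype.card V + 1), ((Γ.cliqueFinset k).card : ℚ) • Polynomial.X ^ k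

def Branch [LinearOrder V] (Γ : SimpleGraph V) (C' C : Set V) : Prop :=
  ∃ i, i ∉ C' ∧ C = insert i {j ∈ C' | Γ.Adj i j} ∧ ∀ j ∈ C, j ≠ i → j < i

def WeakBranch (Γ : SimpleGraph V) (C' C : Set V) : Prop :=
  ∃ i, i ∉ C' ∧ C = insert i {j ∈ C' | Γ.Adj i j}

noncomputable def WeakBranchF (Γ : SimpleGraph V) (C' C : Finset V) : Prop :=
  ∃ i, i ∉ C' ∧ C = insert i (C'.filter (Γ.Adj i))

noncomputable def linkF [Fintype V] (Γ : SimpleGraph V) (C : Finset V) : Finset V :=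
  Finset.univ.filter fun x => x ∉ C ∧ ∀ c ∈ C, Γ.Adj x c

def LinkRegular [Fintype V] (Γ : SimpleGraph V) : Prop :=
  ∀ C₁ C₂ : Finset V, Γ.IsClique (C₁ : Set V) → Γ.IsClique (C₂ : Set V) →
    C₁.card = C₂.card → (linkF Γ C₁).card = (linkF Γ C₂).card

/-! Two words represent the same element of `GraphMonoid Γ` iff, for every pair `a, b` of
non-adjacent vertices, their subwords on the letters `a, b` agree (Cartier–Foata). Hence word
length is an invariant and generators cancel on the left.

Multiplying the growth series by `p_Γ(-t)`, the claim becomes `∑ₖ (-1)ᵏ cₖ a_{n-k} = 0` for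
`n > 0`, where `a_m` counts the elements of length `m`. The left side is a signed count of pairs
`(C, x)` of a clique `C` and an element `x` with `|C| + l(x) = n`, and the sign-reversing
involution moves the least vertex `v` that lies in `C`, or is an initial letter of `x` commuting
with all of `C`: either from `C` to the front of `x`, or from the front of `x` into `C`. Such
vertices for the new pair are among those for the old one, and `v` is still one of them, so `v` is
moved back. -/

open Finset

namespace GraphMonoid

variable {Γ : SimpleGraph V}

theorem gen_commute {i j : V} (h : Γ.Adj i j) : Commute (gen Γ i) (gen Γ j) :=
  (Con.eq _).2 (ConGen.Rel.of _ _ ⟨i, j, h, rfl, rfl⟩)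

theorem exists_prod_map_gen_eq (x : GraphMonoid Γ) :
    ∃ w : List V, (w.map (gen Γ)).prod = x := by
  obtain ⟨a, rfl⟩ := (conGen (graphMonoidRel Γ)).mk'_surjective x
  refine ⟨a.toList, ?_⟩
  rw [show (conGen (graphMonoidRel Γ)).mk' = FreeMonoid.lift (gen Γ) from
    FreeMonoid.hom_eq fun _ ↦ rfl, FreeMonoid.lift_apply]

def lift {N : Type*} [Monoid N] (f : V → N) (hf : ∀ i j, Γ.Adj i j → Commute (f i) (f j)) :
    GraphMonoid Γ →* N :=
  Con.lift _ (FreeMonoid.lift f) <| Con.conGen_le.2 <| by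
    rintro _ _ ⟨i, j, h, rfl, rfl⟩
    simpa using (hf i j h).eq

theorem lift_prod_map_gen {N : Type*} [Monoid N] (f : V → N)
    (hf : ∀ i j, Γ.Adj i j → Commute (f i) (f j)) (w : List V) :
    lift f hf (w.map (gen Γ)).prod = (w.map f).prod := by
  rw [map_list_prod, List.map_map]
  rfl

theorem filter_eq_of_prod_map_gen_eq {a b : V} (hab : ¬Γ.Adj a b) {w w' : List V}
    (h : (w.map (gen Γ)).prod = (w'.map (gen Γ)).prod) :
    w.filter (fun x ↦ x = a ∨ x = b) = w'.filter (fun x ↦ x = a ∨ x = b) := by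
  let f : V → FreeMonoid V := fun x ↦ if x = a ∨ x = b then .of x else 1
  have hf : ∀ i j, Γ.Adj i j → Commute (f i) (f j) := by
    intro i j hij
    by_cases hi : i = a ∨ i = b
    · by_cases hj : j = a ∨ j = b
      · exfalso
        rcases hi with rfl | rfl <;> rcases hj with rfl | rfl
        exacts [hij.ne rfl, hab hij, hab hij.symm, hij.ne rfl]
      · simp [f, hj]
    · simp [f, hi]
  have hproj (l : List V) :
      (l.map f).prod = FreeMonoid.ofList (l.filter fun x ↦ x = a ∨ x = b) := by
    induction l with
    | nil => rfl
    | cons x l ih => by_cases hx : x = a ∨ x = b <;> simp [f, hx, ih]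
  have := congrArg (lift f hf) h
  rwa [lift_prod_map_gen, lift_prod_map_gen, hproj, hproj, FreeMonoid.ofList.apply_eq_iff_eq]
    at this

theorem prod_map_gen_append_cons {u : V} {w₁ : List V} (hu : ∀ x ∈ w₁, Γ.Adj x u)
    (w₂ : List V) :
    ((w₁ ++ u :: w₂).map (gen Γ)).prod = gen Γ u * ((w₁ ++ w₂).map (gen Γ)).prod := by
  have : Commute (w₁.map (gen Γ)).prod (gen Γ u) :=
    Commute.list_prod_left _ _ fun _ hx ↦ by
      obtain ⟨x, hx', rfl⟩ := List.mem_map.1 hx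
      exact gen_commute (hu x hx')
  simp only [List.map_append, List.map_cons, List.prod_append, List.prod_cons, ← mul_assoc,
    this.eq]

theorem exists_eq_append_cons_of_head?_filter {u : V} {w : List V}
    (h : ∀ x, ¬Γ.Adj x u → (w.filter fun y ↦ y = u ∨ y = x).head? = some u) :
    ∃ w₁ w₂, w = w₁ ++ u :: w₂ ∧ ∀ x ∈ w₁, Γ.Adj x u := by
  induction w with
  | nil => simpa using h u Γ.irrefl
  | cons y w ih =>
    by_cases hyu : y = u
    · exact ⟨[], w, by rw [hyu]; rfl, by simp⟩
    have hy : Γ.Adj y u := by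
      by_contra hy
      simpa [hyu, List.filter_cons] using h y hy
    obtain ⟨w₁, w₂, rfl, hw₁⟩ := ih fun x hx ↦ by
      have hxy : x ≠ y := by rintro rfl; exact hx hy
      simpa [hyu, hxy.symm, List.filter_cons] using h x hx
    exact ⟨y :: w₁, w₂, rfl, by simpa [hy] using hw₁⟩

theorem prod_map_gen_eq_of_filter_eq {w w' : List V}
    (h : ∀ a b, ¬Γ.Adj a b →
      w.filter (fun x ↦ x = a ∨ x = b) = w'.filter (fun x ↦ x = a ∨ x = b)) :
    (w.map (gen Γ)).prod = (w'.map (gen Γ)).prod := by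
  induction w generalizing w' with
  | nil =>
    cases w' with
    | nil => rfl
    | cons c w' => simpa [List.filter_cons] using h c c Γ.irrefl
  | cons u t ih =>
    -- `u` occurs in `w'` behind letters commuting with it, so it can be moved to the front.
    obtain ⟨w₁, w₂, rfl, hw₁⟩ := exists_eq_append_cons_of_head?_filter fun x hx ↦ by
      rw [← h u x fun h' ↦ hx h'.symm]
      simp
    have hbubble :
        ((w₁ ++ u :: w₂).map (gen Γ)).prod = ((u :: (w₁ ++ w₂)).map (gen Γ)).prod := by
      rw [prod_map_gen_append_cons hw₁, List.map_cons, List.prod_cons]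
    rw [hbubble, List.map_cons, List.prod_cons, List.map_cons, List.prod_cons,
      ih fun a b hab ↦ ?_]
    have h₁ := h a b hab
    rw [filter_eq_of_prod_map_gen_eq hab hbubble] at h₁
    by_cases hu : u = a ∨ u = b <;> simpa [List.filter_cons, hu] using h₁

theorem length_eq_of_prod_map_gen_eq {w w' : List V}
    (h : (w.map (gen Γ)).prod = (w'.map (gen Γ)).prod) : w.length = w'.length := by
  have := congrArg (lift (fun _ ↦ Multiplicative.ofAdd 1) fun _ _ _ ↦ .all _ _) h
  simpa [lift_prod_map_gen] using this

theorem isLeftRegular_gen (v : V) : IsLeftRegular (gen Γ v) := by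
  intro x y h
  obtain ⟨w, rfl⟩ := exists_prod_map_gen_eq x
  obtain ⟨w', rfl⟩ := exists_prod_map_gen_eq y
  refine prod_map_gen_eq_of_filter_eq fun a b hab ↦ ?_
  have := filter_eq_of_prod_map_gen_eq (w := v :: w) (w' := v :: w') hab (by simpa using h)
  by_cases hv : v = a ∨ v = b <;> simpa [List.filter_cons, hv] using this

theorem adj_and_gen_dvd_of_gen_dvd_gen_mul {u v : V} (huv : u ≠ v) {x : GraphMonoid Γ}
    (h : gen Γ u ∣ gen Γ v * x) : Γ.Adj v u ∧ gen Γ u ∣ x := by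
  obtain ⟨y, h⟩ := h
  obtain ⟨w, rfl⟩ := exists_prod_map_gen_eq x
  obtain ⟨w', rfl⟩ := exists_prod_map_gen_eq y
  have h' : ((v :: w).map (gen Γ)).prod = ((u :: w').map (gen Γ)).prod := by simpa using h
  have hvu : Γ.Adj v u := by
    by_contra hvu
    simpa [List.filter_cons, huv, huv.symm] using filter_eq_of_prod_map_gen_eq hvu h'
  obtain ⟨_ | ⟨y, w₁⟩, w₂, hw, hw₁⟩ :=
    exists_eq_append_cons_of_head?_filter (u := u) (w := v :: w) fun x hx ↦ by
      rw [filter_eq_of_prod_map_gen_eq (fun h ↦ hx h.symm) h']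
      simp
  · exact absurd (List.cons_eq_cons.1 hw).1 huv.symm
  · obtain ⟨rfl, rfl⟩ := List.cons_eq_cons.1 hw
    exact ⟨hvu, _, prod_map_gen_append_cons (fun x hx ↦ hw₁ x (.tail _ hx)) w₂⟩

theorem gen_dvd_gen_mul_of_adj {u v : V} (huv : Γ.Adj u v) {x : GraphMonoid Γ}
    (h : gen Γ u ∣ x) : gen Γ u ∣ gen Γ v * x := by
  obtain ⟨z, rfl⟩ := h
  exact ⟨gen Γ v * z, by rw [← mul_assoc, (gen_commute huv).symm.eq, mul_assoc]⟩

theorem exists_gen_dvd {x : GraphMonoid Γ} (hx : x ≠ 1) : ∃ u, gen Γ u ∣ x := by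
  obtain ⟨_ | ⟨u, w⟩, rfl⟩ := exists_prod_map_gen_eq x
  · exact absurd rfl hx
  · exact ⟨u, dvd_mul_right _ _⟩

theorem mlen_prod_map_gen (w : List V) : mlen (gen Γ) (w.map (gen Γ)).prod = w.length :=
  le_antisymm (Nat.sInf_le ⟨w, rfl, rfl⟩) <| le_csInf ⟨_, w, rfl, rfl⟩
    fun _ ⟨_, h, hn⟩ ↦ hn ▸ (length_eq_of_prod_map_gen_eq h).ge

theorem mlen_gen_mul (v : V) (x : GraphMonoid Γ) :
    mlen (gen Γ) (gen Γ v * x) = mlen (gen Γ) x + 1 := by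
  obtain ⟨w, rfl⟩ := exists_prod_map_gen_eq x
  rw [← List.prod_cons, ← List.map_cons, mlen_prod_map_gen, mlen_prod_map_gen, List.length_cons]

theorem mlen_eq_zero {x : GraphMonoid Γ} : mlen (gen Γ) x = 0 ↔ x = 1 := by
  obtain ⟨w, rfl⟩ := exists_prod_map_gen_eq x
  rw [mlen_prod_map_gen, List.length_eq_zero_iff]
  constructor
  · rintro rfl
    rfl
  · intro h
    simpa using length_eq_of_prod_map_gen_eq (w' := []) (h.trans List.prod_nil.symm)

noncomputable def divGen (v : V) (x : GraphMonoid Γ) : GraphMonoid Γ :=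
  if h : gen Γ v ∣ x then h.choose else x

theorem gen_mul_divGen {v : V} {x : GraphMonoid Γ} (h : gen Γ v ∣ x) :
    gen Γ v * divGen v x = x := by
  rw [divGen, dif_pos h]
  exact h.choose_spec.symm

theorem divGen_gen_mul (v : V) (x : GraphMonoid Γ) : divGen v (gen Γ v * x) = x :=
  isLeftRegular_gen v (gen_mul_divGen (dvd_mul_right _ _))

variable [Fintype V]

variable (Γ) in
noncomputable def sphere (n : ℕ) : Finset (GraphMonoid Γ) :=
  univ.image fun w : List.Vector V n ↦ (w.toList.map (gen Γ)).prod

theorem mem_sphere {n : ℕ} {x : GraphMonoid Γ} : x ∈ sphere Γ n ↔ mlen (gen Γ) x = n := by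
  obtain ⟨w, rfl⟩ := exists_prod_map_gen_eq x
  simp only [sphere, mem_image, mem_univ, true_and, mlen_prod_map_gen]
  constructor
  · rintro ⟨w', hw'⟩
    rw [← length_eq_of_prod_map_gen_eq hw', w'.toList_length]
  · rintro rfl
    exact ⟨⟨w, rfl⟩, rfl⟩

noncomputable def pivots (p : Finset V × GraphMonoid Γ) : Finset V :=
  p.1 ∪ ({u | gen Γ u ∣ p.2 ∧ ∀ c ∈ p.1, Γ.Adj u c} : Finset V)

theorem mem_pivots {p : Finset V × GraphMonoid Γ} {u : V} :
    u ∈ pivots p ↔ u ∈ p.1 ∨ gen Γ u ∣ p.2 ∧ ∀ c ∈ p.1, Γ.Adj u c := by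
  simp [pivots]

noncomputable def toggleAt (v : V) (p : Finset V × GraphMonoid Γ) : Finset V × GraphMonoid Γ :=
  if v ∈ p.1 then (p.1.erase v, gen Γ v * p.2) else (insert v p.1, divGen v p.2)

theorem toggleAt_toggleAt {v : V} {p : Finset V × GraphMonoid Γ} (hv : v ∈ pivots p) :
    toggleAt v (toggleAt v p) = p := by
  obtain ⟨C, x⟩ := p
  by_cases hvC : v ∈ C
  · simp [toggleAt, hvC, divGen_gen_mul, insert_erase hvC]
  · have hvx := ((mem_pivots.1 hv).resolve_left hvC).1
    simp [toggleAt, hvC, gen_mul_divGen hvx]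

theorem mem_pivots_toggleAt {v : V} {p : Finset V × GraphMonoid Γ} (hv : v ∈ pivots p)
    (hC : Γ.IsClique (p.1 : Set V)) : v ∈ pivots (toggleAt v p) := by
  obtain ⟨C, x⟩ := p
  by_cases hvC : v ∈ C
  · refine mem_pivots.2 <| .inr ⟨by simp [toggleAt, hvC], fun c hc ↦ ?_⟩
    simp only [toggleAt, hvC, if_true, mem_erase] at hc
    exact hC hvC hc.2 (Ne.symm hc.1)
  · simp [toggleAt, hvC, pivots]

theorem pivots_toggleAt_subset {v : V} {p : Finset V × GraphMonoid Γ} (hv : v ∈ pivots p) :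
    pivots (toggleAt v p) ⊆ pivots p := by
  obtain ⟨C, x⟩ := p
  intro u hu
  by_cases hvC : v ∈ C
  · simp only [toggleAt, hvC, if_true, mem_pivots, mem_erase] at hu ⊢
    rcases hu with hu | ⟨hux, huC⟩
    · exact .inl hu.2
    by_cases huv : u = v
    · exact .inl (huv ▸ hvC)
    obtain ⟨hvu, hux⟩ := adj_and_gen_dvd_of_gen_dvd_gen_mul huv hux
    refine .inr ⟨hux, fun c hc ↦ ?_⟩
    by_cases hcv : c = v
    · exact hcv ▸ hvu.symm
    · exact huC c ⟨hcv, hc⟩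
  · have hvx := (mem_pivots.1 hv).resolve_left hvC
    simp only [toggleAt, hvC, if_false, mem_pivots, mem_insert, forall_eq_or_imp] at hu ⊢
    rcases hu with (rfl | hu) | ⟨hux, huv, huC⟩
    · exact .inr hvx
    · exact .inl hu
    · refine .inr ⟨?_, huC⟩
      rw [← gen_mul_divGen (x := x) hvx.1]
      exact gen_dvd_gen_mul_of_adj huv hux

theorem neg_one_pow_card_toggleAt {R : Type*} [Ring R] {v : V} {p : Finset V × GraphMonoid Γ}
    (hv : v ∈ pivots p) : (-1 : R) ^ #(toggleAt v p).1 = -(-1) ^ #p.1 := by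
  obtain ⟨C, x⟩ := p
  by_cases hvC : v ∈ C
  · simp only [toggleAt, hvC, if_true]
    rw [← card_erase_add_one hvC, pow_succ, mul_neg_one, neg_neg]
  · simp [toggleAt, hvC, card_insert_of_notMem, pow_succ]

variable (Γ) in
noncomputable def cliquePairs (n : ℕ) : Finset (Finset V × GraphMonoid Γ) :=
  (antidiagonal n).biUnion fun ij ↦ Γ.cliqueFinset ij.1 ×ˢ sphere Γ ij.2

theorem mem_cliquePairs {n : ℕ} {p : Finset V × GraphMonoid Γ} :
    p ∈ cliquePairs Γ n ↔ Γ.IsClique (p.1 : Set V) ∧ #p.1 + mlen (gen Γ) p.2 = n := by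
  simp [cliquePairs, SimpleGraph.isNClique_iff, mem_sphere, and_comm]

theorem toggleAt_mem_cliquePairs {n : ℕ} {v : V} {p : Finset V × GraphMonoid Γ}
    (hp : p ∈ cliquePairs Γ n) (hv : v ∈ pivots p) : toggleAt v p ∈ cliquePairs Γ n := by
  obtain ⟨C, x⟩ := p
  obtain ⟨hC, hn⟩ := mem_cliquePairs.1 hp
  refine mem_cliquePairs.2 ?_
  by_cases hvC : v ∈ C
  · simp only [toggleAt, hvC, if_true, coe_erase, mlen_gen_mul]
    refine ⟨hC.subset Set.sdiff_subset, ?_⟩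
    rw [← hn, ← card_erase_add_one hvC]
    ring
  · obtain ⟨hvx, hvC'⟩ := (mem_pivots.1 hv).resolve_left hvC
    simp only [toggleAt, hvC, if_false, coe_insert, card_insert_of_notMem hvC]
    refine ⟨hC.insert fun c hc _ ↦ hvC' c hc, ?_⟩
    rw [← hn, ← gen_mul_divGen hvx, mlen_gen_mul]
    ring

theorem pivots_nonempty {n : ℕ} (hn : n ≠ 0) {p : Finset V × GraphMonoid Γ}
    (hp : p ∈ cliquePairs Γ n) : (pivots p).Nonempty := by
  obtain ⟨C, x⟩ := p
  obtain ⟨-, hCx⟩ := mem_cliquePairs.1 hp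
  obtain rfl | ⟨c, hc⟩ := C.eq_empty_or_nonempty
  · have hx : x ≠ 1 := by
      rintro rfl
      rw [card_empty, mlen_eq_zero.2 rfl] at hCx
      exact hn hCx.symm
    obtain ⟨u, hu⟩ := exists_gen_dvd hx
    exact ⟨u, mem_pivots.2 (.inr ⟨hu, by simp⟩)⟩
  · exact ⟨c, mem_pivots.2 (.inl hc)⟩

section LinearOrder

variable [LinearOrder V]

noncomputable def toggle (p : Finset V × GraphMonoid Γ) : Finset V × GraphMonoid Γ :=
  if h : (pivots p).Nonempty then toggleAt ((pivots p).min' h) p else p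

theorem toggle_eq_toggleAt {p : Finset V × GraphMonoid Γ} (h : (pivots p).Nonempty) :
    toggle p = toggleAt ((pivots p).min' h) p :=
  dif_pos h

theorem toggle_toggle {p : Finset V × GraphMonoid Γ} (hC : Γ.IsClique (p.1 : Set V))
    (h : (pivots p).Nonempty) : toggle (toggle p) = p := by
  set v := (pivots p).min' h
  have hv : v ∈ pivots p := min'_mem _ _
  have hv' : v ∈ pivots (toggleAt v p) := mem_pivots_toggleAt hv hC
  have hmin : (pivots (toggleAt v p)).min' ⟨v, hv'⟩ = v :=
    le_antisymm (min'_le _ _ hv') <|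
      le_min' _ _ _ fun u hu ↦ min'_le _ _ (pivots_toggleAt_subset hv hu)
  rw [toggle_eq_toggleAt h, toggle_eq_toggleAt ⟨v, hv'⟩, hmin, toggleAt_toggleAt hv]

end LinearOrder

theorem cliquePairs_zero : cliquePairs Γ 0 = {(∅, 1)} := by
  ext ⟨C, x⟩
  simp only [mem_cliquePairs, Nat.add_eq_zero_iff, card_eq_zero, mlen_eq_zero, mem_singleton,
    Prod.mk.injEq]
  exact and_iff_right_of_imp fun ⟨hC, _⟩ ↦ hC ▸ by simp

theorem sum_neg_one_pow_card_cliquePairs (n : ℕ) :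
    ∑ p ∈ cliquePairs Γ n, (-1 : ℚ) ^ #p.1 = if n = 0 then 1 else 0 := by
  rcases eq_or_ne n 0 with rfl | hn
  · simp [cliquePairs_zero]
  rw [if_neg hn]
  let : LinearOrder V := LinearOrder.lift' _ (Fintype.equivFin V).injective
  have hsign (p) (hp : p ∈ cliquePairs Γ n) : (-1 : ℚ) ^ #p.1 + (-1) ^ #(toggle p).1 = 0 := by
    rw [toggle_eq_toggleAt (pivots_nonempty hn hp), neg_one_pow_card_toggleAt (min'_mem _ _),
      add_neg_cancel]
  refine sum_involution (fun p _ ↦ toggle p) hsign (fun p hp hne heq ↦ ?_)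
    (fun p hp ↦ ?_) fun p hp ↦ toggle_toggle (mem_cliquePairs.1 hp).1 (pivots_nonempty hn hp)
  · have := hsign p hp
    rw [heq] at this
    exact hne (by linarith)
  · rw [toggle_eq_toggleAt (pivots_nonempty hn hp)]
    exact toggleAt_mem_cliquePairs hp (min'_mem _ _)

theorem sum_neg_one_pow_card_cliquePairs_eq_sum_antidiagonal (n : ℕ) :
    ∑ p ∈ cliquePairs Γ n, (-1 : ℚ) ^ #p.1 =
      ∑ ij ∈ antidiagonal n,
        (-1 : ℚ) ^ ij.1 * #(Γ.cliqueFinset ij.1) * #(sphere Γ ij.2) := by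
  rw [cliquePairs, sum_biUnion]
  · refine sum_congr rfl fun ij _ ↦ ?_
    rw [sum_congr rfl fun p hp ↦ by
        rw [(SimpleGraph.mem_cliqueFinset_iff.1 (mem_product.1 hp).1).card_eq],
      sum_const, card_product, nsmul_eq_mul]
    push_cast
    ring
  · intro ij hij kl hkl hne
    have : ij.1 ≠ kl.1 := by
      rw [mem_coe, HasAntidiagonal.mem_antidiagonal] at hij hkl
      exact fun h ↦ hne (Prod.ext h (by omega))
    refine disjoint_product.2 (.inl (disjoint_left.2 fun C hi hk ↦ this ?_))
    rw [← (SimpleGraph.mem_cliqueFinset_iff.1 hi).card_eq,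
      (SimpleGraph.mem_cliqueFinset_iff.1 hk).card_eq]

end GraphMonoid

theorem Polynomial.coeff_aeval_neg_X {R : Type*} [CommRing R] (p : Polynomial R) (m : ℕ) :
    PowerSeries.coeff m (Polynomial.aeval (-(PowerSeries.X : PowerSeries R)) p)
      = (-1) ^ m * p.coeff m := by
  induction p using Polynomial.induction_on' with
  | add p q hp hq => simp [hp, hq, mul_add]
  | monomial n a =>
    have : (-PowerSeries.X : PowerSeries R) ^ n = PowerSeries.C ((-1) ^ n) * PowerSeries.X ^ n := by
      rw [neg_pow, map_pow, map_neg, map_one]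
    rw [Polynomial.aeval_monomial, this, PowerSeries.algebraMap_apply, Algebra.algebraMap_self,
      RingHom.id_apply, ← mul_assoc, ← map_mul, PowerSeries.coeff_C_mul_X_pow,
      Polynomial.coeff_monomial]
    obtain rfl | hmn := eq_or_ne m n
    · simp [mul_comm]
    · simp [hmn, hmn.symm]

theorem coeff_cliquePoly [Fintype V] (Γ : SimpleGraph V) (m : ℕ) :
    (cliquePoly Γ).coeff m = #(Γ.cliqueFinset m) := by
  simp only [cliquePoly, Polynomial.finsetSum_coeff, Polynomial.coeff_smul,
    Polynomial.coeff_X_pow, smul_eq_mul, mul_ite, mul_one, mul_zero, sum_ite_eq, mem_range]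
  split_ifs with h
  · rfl
  · rw [(Γ.cliqueFree_of_card_lt (by omega)).cliqueFinset]
    simp

theorem graph_monoid_growth_clique_poly {V : Type*} [Fintype V] (Γ : SimpleGraph V) :
    PowerSeries.mk (fun n => (Nat.card {x : GraphMonoid Γ // mlen (GraphMonoid.gen Γ) x = n} : ℚ)) =
      (Polynomial.aeval (-(PowerSeries.X : PowerSeries ℚ)) (cliquePoly Γ))⁻¹ := by
  have hconst : PowerSeries.constantCoeff
      (Polynomial.aeval (-(PowerSeries.X : PowerSeries ℚ)) (cliquePoly Γ)) = 1 := by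
    rw [← PowerSeries.coeff_zero_eq_constantCoeff_apply, Polynomial.coeff_aeval_neg_X,
      coeff_cliquePoly]
    simp [SimpleGraph.cliqueFinset, SimpleGraph.isNClique_zero, filter_eq']
  rw [PowerSeries.eq_inv_iff_mul_eq_one (by simp [hconst]), mul_comm]
  ext n
  rw [PowerSeries.coeff_mul, PowerSeries.coeff_one,
    ← GraphMonoid.sum_neg_one_pow_card_cliquePairs (Γ := Γ),
    GraphMonoid.sum_neg_one_pow_card_cliquePairs_eq_sum_antidiagonal]
  refine sum_congr rfl fun ij _ ↦ ?_
  rw [Polynomial.coeff_aeval_neg_X, coeff_cliquePoly, PowerSeries.coeff_mk,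
    Nat.subtype_card _ fun _ ↦ GraphMonoid.mem_sphere, mul_assoc]
end

section
/- The spherical growth series of the right-angled Coxeter group W(Γ) equals 1/p_Γ(-t/(1+t)), where p_Γ is the clique polynomial of Γ. -/
/-!
`W(Γ)` acts on reduced words modulo swaps of consecutive letters joined in `Γ`: `s_i` deletes
a letter `i` that can be swapped to the front, and otherwise prepends `i`. The orbit of the empty
word solves the word problem: the length of `x` is the length of its normal form, and the left
descents of `x` are the letters that can be swapped to the front, so they form a clique.

For a clique `C` and `a ∈ C`, left multiplication by `s_a` exchanges the elements whose descent
set meets `C` in `insert a B` with those for which it meets `C` in `B`, and shifts length by one.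
Summing over `B ⊆ C`, the growth series is `(1 + t) ^ |C|` times the series of the elements with
no descent in `C`, and the elements with `C` among their descents contribute
`(t / (1 + t)) ^ |C| · W(t)`. Since `∑_{C ⊆ D(x)} (-1) ^ |C|` vanishes unless `x = 1`, summing
the latter over all cliques with sign `(-1) ^ |C|` gives `p_Γ(-t / (1 + t)) · W(t) = 1`.
-/

open scoped Classical

variable {V : Type*} {M : Type*} {G : Type*}

section WordLength

variable [Monoid M] {f : V → M}

lemma mlen_le_length (w : List V) : mlen f (w.map f).prod ≤ w.length :=
  Nat.sInf_le ⟨w, rfl, rfl⟩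

lemma exists_length_eq_mlen {x : M} (h : ∃ w : List V, (w.map f).prod = x) :
    ∃ w : List V, (w.map f).prod = x ∧ w.length = mlen f x := by
  obtain ⟨w, hw⟩ := h
  exact Nat.sInf_mem (s := {n | ∃ w : List V, (w.map f).prod = x ∧ w.length = n})
    ⟨_, w, hw, rfl⟩

lemma mlen_one (f : V → M) : mlen f 1 = 0 :=
  Nat.le_zero.1 (mlen_le_length (f := f) [])

end WordLength

lemma aeval_cliquePoly {A : Type*} [CommSemiring A] [Algebra ℚ A] [Fintype V]
    (Γ : SimpleGraph V) (a : A) :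
    Polynomial.aeval a (cliquePoly Γ) =
      ∑ C ∈ Finset.univ.filter fun C : Finset V => Γ.IsClique (C : Set V), a ^ C.card := by
  rw [cliquePoly, map_sum, ← Finset.sum_fiberwise_of_maps_to (g := Finset.card)
    (t := Finset.range (Fintype.card V + 1))
    fun C _ => Finset.mem_range_succ_iff.2 (Finset.card_le_univ C)]
  refine Finset.sum_congr rfl fun k _ => ?_
  rw [Finset.filter_filter, Finset.sum_congr rfl fun C hC => by rw [(Finset.mem_filter.1 hC).2.2],
    Finset.sum_const, map_smul, map_pow, Polynomial.aeval_X, ← Nat.cast_smul_eq_nsmul ℚ]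
  congr 3
  ext C
  simp [SimpleGraph.isNClique_iff]

namespace RACG

variable {Γ : SimpleGraph V} {i j : V} {w w' : List V}

section Words

variable (Γ)

inductive Swap : List V → List V → Prop
  | swap (a b : List V) {x y : V} : Γ.Adj x y → Swap (a ++ x :: y :: b) (a ++ y :: x :: b)

/-- Swapping consecutive letters joined in `Γ` brings an `i` of the word to the front. -/
def StartsWith (i : V) : List V → Prop
  | [] => False
  | j :: w => i = j ∨ (Γ.Adj i j ∧ StartsWith i w)

def Reduced : List V → Prop
  | [] => True
  | j :: w => ¬ StartsWith Γ j w ∧ Reduced w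

variable {Γ}

lemma Swap.cons (h : Swap Γ w w') (c : V) : Swap Γ (c :: w) (c :: w') := by
  obtain ⟨a, b, hxy⟩ := h
  exact .swap (c :: a) b hxy

lemma Swap.length_eq (h : Swap Γ w w') : w.length = w'.length := by
  obtain ⟨a, b, -⟩ := h
  simp

lemma startsWith_cons_of_adj (h : Γ.Adj i j) : StartsWith Γ i (j :: w) ↔ StartsWith Γ i w := by
  simp [StartsWith, h.ne, h]

lemma StartsWith.mem (h : StartsWith Γ i w) : i ∈ w := by
  induction w with
  | nil => exact h.elim
  | cons j w ih => rcases h with rfl | ⟨-, h⟩ <;> simp [*]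

lemma StartsWith.adj (hi : StartsWith Γ i w) (hj : StartsWith Γ j w) (hij : i ≠ j) :
    Γ.Adj i j := by
  induction w with
  | nil => exact hi.elim
  | cons k w ih =>
    rcases hi with rfl | ⟨hik, hi⟩ <;> rcases hj with rfl | ⟨hjk, hj⟩
    exacts [absurd rfl hij, hjk.symm, hik, ih hi hj]

lemma Swap.startsWith_iff (h : Swap Γ w w') : StartsWith Γ i w ↔ StartsWith Γ i w' := by
  obtain ⟨a, b, hxy⟩ := h
  induction a with
  | nil =>
    simp only [List.nil_append, StartsWith]
    have := hxy.symm
    constructor <;> rintro (rfl | ⟨h₁, rfl | ⟨h₂, h₃⟩⟩) <;> simp_all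
  | cons c a ih => simp only [List.cons_append, StartsWith, ih]

lemma Swap.reduced_iff (h : Swap Γ w w') : Reduced Γ w ↔ Reduced Γ w' := by
  obtain ⟨a, b, hxy⟩ := h
  induction a with
  | nil =>
    simp only [List.nil_append, Reduced, startsWith_cons_of_adj hxy,
      startsWith_cons_of_adj hxy.symm]
    tauto
  | cons c a ih =>
    simp only [List.cons_append, Reduced, ih,
      (Swap.swap a b hxy).startsWith_iff]

lemma Swap.erase (h : Swap Γ w w') (i : V) :
    w.erase i = w'.erase i ∨ Swap Γ (w.erase i) (w'.erase i) := by
  obtain @⟨a, b, x, y, hxy⟩ := h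
  by_cases hia : i ∈ a
  · rw [List.erase_append_left _ hia, List.erase_append_left _ hia]
    exact .inr (.swap _ b hxy)
  rw [List.erase_append_right _ hia, List.erase_append_right _ hia]
  by_cases hx : x = i
  · subst hx
    simp [hxy.ne.symm]
  by_cases hy : y = i
  · subst hy
    simp [hxy.ne]
  rw [List.erase_cons_tail (by simpa using hx), List.erase_cons_tail (by simpa using hy),
    List.erase_cons_tail (by simpa using hy), List.erase_cons_tail (by simpa using hx)]
  exact .inr (.swap a _ hxy)

lemma startsWith_erase_iff (h : Γ.Adj j i) :
    StartsWith Γ j (w.erase i) ↔ StartsWith Γ j w := by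
  induction w with
  | nil => rfl
  | cons k w ih =>
    by_cases hk : k = i
    · subst hk
      rw [List.erase_cons_head, startsWith_cons_of_adj h]
    · rw [List.erase_cons_tail (by simpa using hk)]
      simp only [StartsWith, ih]

lemma Reduced.not_startsWith_erase (hw : Reduced Γ w) (hi : StartsWith Γ i w) :
    ¬ StartsWith Γ i (w.erase i) := by
  induction w with
  | nil => exact hi.elim
  | cons j w ih =>
    rcases hi with rfl | ⟨hij, hi⟩
    · simpa using hw.1
    · rw [List.erase_cons_tail (by simpa using hij.ne.symm), startsWith_cons_of_adj hij]
      exact ih hw.2 hi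

lemma Reduced.erase (hw : Reduced Γ w) (hi : StartsWith Γ i w) : Reduced Γ (w.erase i) := by
  induction w with
  | nil => exact hi.elim
  | cons j w ih =>
    rcases hi with rfl | ⟨hij, hi⟩
    · simpa using hw.2
    · rw [List.erase_cons_tail (by simpa using hij.ne.symm)]
      exact ⟨by rw [startsWith_erase_iff hij.symm]; exact hw.1, ih hw.2 hi⟩

end Words

section Traces

variable (Γ) in
abbrev Trace := Quot (Swap Γ)

namespace Trace

variable {t : Trace Γ}

def length : Trace Γ → ℕ := Quot.lift List.length fun _ _ h => h.length_eq

def StartsWith (i : V) : Trace Γ → Prop :=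
  Quot.lift (RACG.StartsWith Γ i) fun _ _ h => propext h.startsWith_iff

def Reduced : Trace Γ → Prop :=
  Quot.lift (RACG.Reduced Γ) fun _ _ h => propext h.reduced_iff

def cons (i : V) : Trace Γ → Trace Γ :=
  Quot.map (i :: ·) fun _ _ h => h.cons i

noncomputable def erase (i : V) : Trace Γ → Trace Γ :=
  Quot.lift (fun w => Quot.mk _ (w.erase i)) fun _ _ h =>
    (h.erase i).elim (congrArg _) Quot.sound

noncomputable def toggle (i : V) (t : Trace Γ) : Trace Γ :=
  if t.StartsWith i then t.erase i else t.cons i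

@[simp] lemma cons_mk : cons i (Quot.mk (Swap Γ) w) = Quot.mk _ (i :: w) := rfl

@[simp] lemma erase_mk : erase i (Quot.mk (Swap Γ) w) = Quot.mk _ (w.erase i) := rfl

lemma length_cons (i : V) (t : Trace Γ) : (t.cons i).length = t.length + 1 := by
  induction t using Quot.ind
  rfl

lemma startsWith_cons_iff :
    (t.cons i).StartsWith j ↔ j = i ∨ (Γ.Adj j i ∧ t.StartsWith j) := by
  induction t using Quot.ind
  rfl

lemma reduced_cons_iff : (t.cons i).Reduced ↔ ¬ t.StartsWith i ∧ t.Reduced := by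
  induction t using Quot.ind
  rfl

lemma cons_comm (h : Γ.Adj i j) (t : Trace Γ) : (t.cons j).cons i = (t.cons i).cons j := by
  induction t using Quot.ind
  exact Quot.sound (.swap [] _ h)

lemma erase_cons (i : V) (t : Trace Γ) : (t.cons i).erase i = t := by
  induction t using Quot.ind
  simp

lemma erase_cons_of_ne (h : i ≠ j) (t : Trace Γ) : (t.cons j).erase i = (t.erase i).cons j := by
  induction t using Quot.ind
  simp [List.erase_cons_tail, Ne.symm h]

lemma erase_comm (i j : V) (t : Trace Γ) : (t.erase i).erase j = (t.erase j).erase i := by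
  induction t using Quot.ind
  simp [List.erase_comm]

lemma StartsWith.length_erase (h : t.StartsWith i) : (t.erase i).length + 1 = t.length := by
  induction t using Quot.ind
  exact List.length_erase_add_one (RACG.StartsWith.mem h)

lemma StartsWith.cons_erase (h : t.StartsWith i) : (t.erase i).cons i = t := by
  induction t using Quot.ind with | mk w => ?_
  induction w with
  | nil => exact h.elim
  | cons j w ih =>
    rcases h with rfl | ⟨hij, h⟩
    · simp
    · have := congrArg (cons j) (ih h)
      simp only [erase_mk, cons_mk] at this ⊢
      rw [List.erase_cons_tail (by simpa using hij.ne.symm), ← this]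
      exact Quot.sound (.swap [] _ hij)

lemma startsWith_erase_iff (h : Γ.Adj j i) : (t.erase i).StartsWith j ↔ t.StartsWith j := by
  induction t using Quot.ind
  exact RACG.startsWith_erase_iff h

lemma Reduced.not_startsWith_erase (ht : t.Reduced) (hi : t.StartsWith i) :
    ¬ (t.erase i).StartsWith i := by
  induction t using Quot.ind
  exact RACG.Reduced.not_startsWith_erase ht hi

lemma Reduced.erase (ht : t.Reduced) (hi : t.StartsWith i) : (t.erase i).Reduced := by
  induction t using Quot.ind
  exact RACG.Reduced.erase ht hi

lemma StartsWith.adj (hi : t.StartsWith i) (hj : t.StartsWith j) (hij : i ≠ j) : Γ.Adj i j := by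
  induction t using Quot.ind
  exact RACG.StartsWith.adj hi hj hij

lemma eq_nil_of_forall_not_startsWith (h : ∀ i, ¬ t.StartsWith i) : t = Quot.mk _ [] := by
  induction t using Quot.ind with | mk w => ?_
  cases w with
  | nil => rfl
  | cons i w => exact (h i (Or.inl rfl)).elim

lemma toggle_of_startsWith (h : t.StartsWith i) : t.toggle i = t.erase i := if_pos h

lemma toggle_of_not_startsWith (h : ¬ t.StartsWith i) : t.toggle i = t.cons i := if_neg h

lemma length_toggle_of_startsWith (h : t.StartsWith i) : (t.toggle i).length + 1 = t.length := by
  rw [toggle_of_startsWith h, h.length_erase]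

lemma length_toggle_of_not_startsWith (h : ¬ t.StartsWith i) :
    (t.toggle i).length = t.length + 1 := by
  rw [toggle_of_not_startsWith h, length_cons]

lemma Reduced.toggle (ht : t.Reduced) (i : V) : (t.toggle i).Reduced := by
  by_cases h : t.StartsWith i
  · rw [toggle_of_startsWith h]
    exact ht.erase h
  · rw [toggle_of_not_startsWith h, reduced_cons_iff]
    exact ⟨h, ht⟩

lemma Reduced.toggle_toggle (ht : t.Reduced) (i : V) : (t.toggle i).toggle i = t := by
  by_cases h : t.StartsWith i
  · rw [toggle_of_startsWith h, toggle_of_not_startsWith (ht.not_startsWith_erase h),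
      h.cons_erase]
  · rw [toggle_of_not_startsWith h, toggle_of_startsWith (startsWith_cons_iff.2 (Or.inl rfl)),
      erase_cons]

lemma startsWith_toggle_iff (h : Γ.Adj j i) : (t.toggle i).StartsWith j ↔ t.StartsWith j := by
  by_cases hi : t.StartsWith i
  · rw [toggle_of_startsWith hi, startsWith_erase_iff h]
  · rw [toggle_of_not_startsWith hi, startsWith_cons_iff]
    simp [h, h.ne]

lemma toggle_comm (h : Γ.Adj i j) (t : Trace Γ) :
    (t.toggle j).toggle i = (t.toggle i).toggle j := by
  by_cases hi : t.StartsWith i <;> by_cases hj : t.StartsWith j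
  · rw [toggle_of_startsWith hi, toggle_of_startsWith hj,
      toggle_of_startsWith ((startsWith_erase_iff h).2 hi),
      toggle_of_startsWith ((startsWith_erase_iff h.symm).2 hj), erase_comm]
  · rw [toggle_of_startsWith hi, toggle_of_not_startsWith hj,
      toggle_of_not_startsWith (mt (startsWith_erase_iff h.symm).1 hj),
      toggle_of_startsWith (startsWith_cons_iff.2 (Or.inr ⟨h, hi⟩)), erase_cons_of_ne h.ne]
  · rw [toggle_of_not_startsWith hi, toggle_of_startsWith hj,
      toggle_of_not_startsWith (mt (startsWith_erase_iff h).1 hi),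
      toggle_of_startsWith (startsWith_cons_iff.2 (Or.inr ⟨h.symm, hj⟩)),
      erase_cons_of_ne h.ne.symm]
  · rw [toggle_of_not_startsWith hi, toggle_of_not_startsWith hj,
      toggle_of_not_startsWith (by simp [startsWith_cons_iff, h.ne, hi]),
      toggle_of_not_startsWith (by simp [startsWith_cons_iff, h.ne.symm, hj]), cons_comm h]

end Trace

end Traces

section NormalForm

variable (Γ) in
lemma gen_mul_self (i : V) : gen Γ i * gen Γ i = 1 :=
  PresentedGroup.one_of_mem (Or.inr ⟨i, rfl⟩)

variable (Γ) in
lemma gen_inv (i : V) : (gen Γ i)⁻¹ = gen Γ i :=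
  inv_eq_of_mul_eq_one_right (gen_mul_self Γ i)

lemma commute_gen (h : Γ.Adj i j) : Commute (gen Γ i) (gen Γ j) :=
  commutatorElement_eq_one_iff_commute.1 (PresentedGroup.one_of_mem (Or.inl ⟨i, j, h, rfl⟩))

lemma exists_word (x : RACG Γ) : ∃ w : List V, (w.map (gen Γ)).prod = x := by
  have hx : x ∈ Subgroup.closure (Set.range (gen Γ)) :=
    (PresentedGroup.closure_range_of _).symm ▸ Subgroup.mem_top x
  induction hx using Subgroup.closure_induction with
  | mem _ hx =>
    obtain ⟨i, rfl⟩ := hx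
    exact ⟨[i], by simp⟩
  | one => exact ⟨[], rfl⟩
  | mul _ _ _ _ hx hy =>
    obtain ⟨u, rfl⟩ := hx
    obtain ⟨v, rfl⟩ := hy
    exact ⟨u ++ v, by simp⟩
  | inv _ _ hx =>
    obtain ⟨u, rfl⟩ := hx
    exact ⟨u.reverse, by simp [List.prod_inv_reverse, Function.comp_def, gen_inv]⟩

namespace Trace

def prod : Trace Γ → RACG Γ :=
  Quot.lift (fun w => (w.map (gen Γ)).prod) fun _ _ h => by
    obtain ⟨a, b, hxy⟩ := h
    simp [← mul_assoc, (commute_gen hxy).eq]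

lemma prod_cons (i : V) (t : Trace Γ) : (t.cons i).prod = gen Γ i * t.prod := by
  induction t using Quot.ind
  simp [prod]

lemma prod_toggle (i : V) (t : Trace Γ) : (t.toggle i).prod = gen Γ i * t.prod := by
  by_cases h : t.StartsWith i
  · conv_rhs => rw [← h.cons_erase]
    rw [toggle_of_startsWith h, prod_cons, ← mul_assoc, gen_mul_self, one_mul]
  · rw [toggle_of_not_startsWith h, prod_cons]

end Trace

variable (Γ) in
def ReducedTrace := {t : Trace Γ // t.Reduced}

noncomputable def togglePerm (i : V) : Equiv.Perm (ReducedTrace Γ) :=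
  Function.Involutive.toPerm (fun t => ⟨t.1.toggle i, t.2.toggle i⟩)
    fun t => Subtype.ext (t.2.toggle_toggle i)

open commutatorElement in
lemma lift_togglePerm_eq_one :
    ∀ r ∈ racgRels Γ, FreeGroup.lift (togglePerm (Γ := Γ)) r = 1 := by
  rintro r (⟨i, j, h, rfl⟩ | ⟨i, rfl⟩)
  · change FreeGroup.lift togglePerm ⁅FreeGroup.of i, FreeGroup.of j⁆ = 1
    rw [map_commutatorElement, commutatorElement_eq_one_iff_commute, FreeGroup.lift_apply_of,
      FreeGroup.lift_apply_of]
    exact Equiv.ext fun t => Subtype.ext (Trace.toggle_comm h t.1)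
  · rw [map_mul, FreeGroup.lift_apply_of]
    exact Equiv.ext fun t => Subtype.ext (t.2.toggle_toggle i)

variable (Γ) in
noncomputable def normalFormHom : RACG Γ →* Equiv.Perm (ReducedTrace Γ) :=
  PresentedGroup.toGroup lift_togglePerm_eq_one

noncomputable def normalForm (x : RACG Γ) : Trace Γ :=
  (normalFormHom Γ x ⟨Quot.mk _ [], trivial⟩).1

lemma normalForm_one : normalForm (1 : RACG Γ) = Quot.mk _ [] := by
  rw [normalForm, map_one]
  rfl

lemma normalForm_gen_mul (i : V) (x : RACG Γ) :
    normalForm (gen Γ i * x) = (normalForm x).toggle i := by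
  simp only [normalForm, map_mul, normalFormHom, gen,
    PresentedGroup.toGroup.of]
  rfl

lemma prod_normalForm (x : RACG Γ) : (normalForm x).prod = x := by
  obtain ⟨w, rfl⟩ := exists_word x
  induction w with
  | nil => simp [normalForm_one, Trace.prod]
  | cons i w ih => rw [List.map_cons, List.prod_cons, normalForm_gen_mul, Trace.prod_toggle, ih]

lemma length_normalForm_le (w : List V) :
    (normalForm (w.map (gen Γ)).prod).length ≤ w.length := by
  induction w with
  | nil => simp [normalForm_one, Trace.length]
  | cons i w ih =>
    rw [List.map_cons, List.prod_cons, normalForm_gen_mul, List.length_cons]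
    by_cases h : (normalForm (w.map (gen Γ)).prod).StartsWith i
    · have := Trace.length_toggle_of_startsWith h
      omega
    · rw [Trace.length_toggle_of_not_startsWith h]
      omega

lemma mlen_eq_length_normalForm (x : RACG Γ) : mlen (gen Γ) x = (normalForm x).length := by
  refine le_antisymm ?_ ?_
  · obtain ⟨w, hw⟩ := Quot.exists_rep (normalForm x)
    have hprod : (w.map (gen Γ)).prod = x := by rw [← prod_normalForm x, ← hw]; rfl
    rw [← hw, ← hprod]
    exact mlen_le_length w
  · obtain ⟨w, rfl, hw⟩ := exists_length_eq_mlen (exists_word x)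
    exact hw ▸ length_normalForm_le w

end NormalForm

section Descents

variable {x : RACG Γ}

def IsLeftDescent (x : RACG Γ) (i : V) : Prop :=
  mlen (gen Γ) (gen Γ i * x) < mlen (gen Γ) x

lemma isLeftDescent_iff_startsWith : IsLeftDescent x i ↔ (normalForm x).StartsWith i := by
  rw [IsLeftDescent, mlen_eq_length_normalForm, mlen_eq_length_normalForm, normalForm_gen_mul]
  by_cases h : (normalForm x).StartsWith i
  · have := Trace.length_toggle_of_startsWith h
    simp only [h, iff_true]
    omega
  · rw [Trace.length_toggle_of_not_startsWith h]
    simp [h]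

lemma mlen_gen_mul_of_isLeftDescent (h : IsLeftDescent x i) :
    mlen (gen Γ) (gen Γ i * x) + 1 = mlen (gen Γ) x := by
  rw [mlen_eq_length_normalForm, mlen_eq_length_normalForm, normalForm_gen_mul]
  exact Trace.length_toggle_of_startsWith (isLeftDescent_iff_startsWith.1 h)

lemma mlen_gen_mul_of_not_isLeftDescent (h : ¬ IsLeftDescent x i) :
    mlen (gen Γ) (gen Γ i * x) = mlen (gen Γ) x + 1 := by
  rw [mlen_eq_length_normalForm, mlen_eq_length_normalForm, normalForm_gen_mul]
  exact Trace.length_toggle_of_not_startsWith (mt isLeftDescent_iff_startsWith.2 h)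

lemma isLeftDescent_gen_mul_self_iff : IsLeftDescent (gen Γ i * x) i ↔ ¬ IsLeftDescent x i := by
  unfold IsLeftDescent
  rw [← mul_assoc, gen_mul_self, one_mul]
  by_cases h : IsLeftDescent x i
  · have := mlen_gen_mul_of_isLeftDescent h
    omega
  · have := mlen_gen_mul_of_not_isLeftDescent h
    omega

lemma isLeftDescent_gen_mul_iff (h : Γ.Adj j i) :
    IsLeftDescent (gen Γ i * x) j ↔ IsLeftDescent x j := by
  rw [isLeftDescent_iff_startsWith, isLeftDescent_iff_startsWith, normalForm_gen_mul,
    Trace.startsWith_toggle_iff h]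

lemma IsLeftDescent.adj (hi : IsLeftDescent x i) (hj : IsLeftDescent x j) (hij : i ≠ j) :
    Γ.Adj i j :=
  (isLeftDescent_iff_startsWith.1 hi).adj (isLeftDescent_iff_startsWith.1 hj) hij

lemma forall_not_isLeftDescent_iff : (∀ i, ¬ IsLeftDescent x i) ↔ x = 1 := by
  refine ⟨fun h => ?_, ?_⟩
  · rw [← prod_normalForm x, Trace.eq_nil_of_forall_not_startsWith
      fun i => mt isLeftDescent_iff_startsWith.2 (h i)]
    rfl
  · rintro rfl i
    simp [IsLeftDescent, mlen_one]

end Descents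

section Counting

open PowerSeries

variable [Fintype V] {x : RACG Γ} {a : V} {B C : Finset V}

lemma finite_setOf_mlen_eq (n : ℕ) : {x : RACG Γ | mlen (gen Γ) x = n}.Finite := by
  refine ((List.finite_length_eq V n).image fun w => (w.map (gen Γ)).prod).subset fun x hx => ?_
  obtain ⟨w, hw, hlen⟩ := exists_length_eq_mlen (exists_word x)
  exact ⟨w, hlen.trans hx, hw⟩

variable (Γ) in
noncomputable def sphere (n : ℕ) : Finset (RACG Γ) := (finite_setOf_mlen_eq n).toFinset

@[simp] lemma mem_sphere {n : ℕ} : x ∈ sphere Γ n ↔ mlen (gen Γ) x = n :=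
  Set.Finite.mem_toFinset _

lemma card_sphere (n : ℕ) : Nat.card {x : RACG Γ // mlen (gen Γ) x = n} = (sphere Γ n).card :=
  Nat.card_eq_card_finite_toFinset _

noncomputable def descents (x : RACG Γ) : Finset V := {i | IsLeftDescent x i}

@[simp] lemma mem_descents : i ∈ descents x ↔ IsLeftDescent x i := by
  simp [descents]

lemma descents_eq_empty_iff : descents x = ∅ ↔ x = 1 := by
  simp [Finset.eq_empty_iff_forall_notMem, forall_not_isLeftDescent_iff]

lemma isClique_descents (x : RACG Γ) : Γ.IsClique (descents x : Set V) :=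
  fun _ hi _ hj hij => IsLeftDescent.adj (mem_descents.1 hi) (mem_descents.1 hj) hij

lemma descents_inter_eq_iff (hBC : B ⊆ C) :
    descents x ∩ C = B ↔ ∀ j ∈ C, IsLeftDescent x j ↔ j ∈ B := by
  refine ⟨fun h j hj => by rw [← mem_descents, ← h, Finset.mem_inter, and_iff_left hj],
    fun h => Finset.ext fun j => ?_⟩
  rw [Finset.mem_inter, mem_descents]
  exact ⟨fun hj => (h j hj.2).1 hj.1, fun hj => ⟨(h j (hBC hj)).2 hj, hBC hj⟩⟩

lemma descents_gen_mul_inter_eq_iff (hC : Γ.IsClique (C : Set V)) (haC : a ∈ C) (hBC : B ⊆ C)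
    (haB : a ∉ B) : descents (gen Γ a * x) ∩ C = B ↔ descents x ∩ C = insert a B := by
  rw [descents_inter_eq_iff hBC, descents_inter_eq_iff (Finset.insert_subset haC hBC)]
  refine forall₂_congr fun j hj => ?_
  by_cases hja : j = a
  · subst hja
    simp [isLeftDescent_gen_mul_self_iff, haB]
  · rw [isLeftDescent_gen_mul_iff (hC hj haC hja), Finset.mem_insert, or_iff_right hja]

variable (Γ) in
noncomputable def growthSeries : PowerSeries ℚ :=
  mk fun n => (Nat.card {x : RACG Γ // mlen (gen Γ) x = n} : ℚ)

variable (Γ) in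
noncomputable def lengthSeries (p : RACG Γ → Prop) [DecidablePred p] : PowerSeries ℚ :=
  mk fun n => ((sphere Γ n).filter p).card

lemma lengthSeries_congr {p q : RACG Γ → Prop} [DecidablePred p] [DecidablePred q]
    (h : ∀ x, p x ↔ q x) : lengthSeries Γ p = lengthSeries Γ q := by
  simp only [lengthSeries, h]

lemma lengthSeries_descents_inter_insert (hC : Γ.IsClique (C : Set V)) (haC : a ∈ C)
    (hBC : B ⊆ C) (haB : a ∉ B) :
    lengthSeries Γ (descents · ∩ C = insert a B) =
      X * lengthSeries Γ (descents · ∩ C = B) := by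
  have hdesc {x : RACG Γ} (hx : descents x ∩ C = insert a B) : IsLeftDescent x a := by
    have := hx ▸ Finset.mem_insert_self a B
    exact mem_descents.1 (Finset.mem_inter.1 this).1
  ext n
  rcases n with _ | n
  · rw [coeff_zero_X_mul, lengthSeries, coeff_mk, Nat.cast_eq_zero, Finset.card_eq_zero,
      Finset.filter_eq_empty_iff]
    intro x hx hxB
    have := mlen_gen_mul_of_isLeftDescent (hdesc hxB)
    simp only [mem_sphere] at hx
    omega
  rw [coeff_succ_X_mul, lengthSeries, lengthSeries, coeff_mk, coeff_mk, Nat.cast_inj]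
  refine Finset.card_nbij' (gen Γ a * ·) (gen Γ a * ·) ?_ ?_ ?_ ?_
  · intro x hx
    simp only [Finset.coe_filter, mem_sphere, Set.mem_ofPred_eq] at hx ⊢
    have := mlen_gen_mul_of_isLeftDescent (hdesc hx.2)
    exact ⟨by omega, (descents_gen_mul_inter_eq_iff hC haC hBC haB).2 hx.2⟩
  · intro y hy
    simp only [Finset.coe_filter, mem_sphere, Set.mem_ofPred_eq] at hy ⊢
    have hya : ¬ IsLeftDescent y a := fun h => haB (hy.2 ▸ by simpa [haC] using h)
    refine ⟨by rw [mlen_gen_mul_of_not_isLeftDescent hya, hy.1], ?_⟩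
    rw [← descents_gen_mul_inter_eq_iff hC haC hBC haB, ← mul_assoc, gen_mul_self, one_mul]
    exact hy.2
  all_goals intro x _; simp [← mul_assoc, gen_mul_self]

lemma lengthSeries_descents_inter_eq (hC : Γ.IsClique (C : Set V)) (hBC : B ⊆ C) :
    lengthSeries Γ (descents · ∩ C = B) =
      X ^ B.card * lengthSeries Γ (descents · ∩ C = ∅) := by
  induction B using Finset.induction_on with
  | empty => simp
  | insert a B haB ih =>
    rw [Finset.insert_subset_iff] at hBC
    rw [lengthSeries_descents_inter_insert hC hBC.1 hBC.2 haB, ih hBC.2,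
      Finset.card_insert_of_notMem haB, pow_succ', mul_assoc]

lemma growthSeries_eq_sum_lengthSeries (C : Finset V) :
    growthSeries Γ = ∑ B ∈ C.powerset, lengthSeries Γ (descents · ∩ C = B) := by
  ext n
  rw [growthSeries, coeff_mk, map_sum, card_sphere,
    Finset.card_eq_sum_card_fiberwise (f := (descents · ∩ C)) (t := C.powerset)
      (fun x _ => by simp), Nat.cast_sum]
  refine Finset.sum_congr rfl fun B _ => ?_
  rw [lengthSeries, coeff_mk]

lemma growthSeries_eq (hC : Γ.IsClique (C : Set V)) :
    growthSeries Γ = (1 + X) ^ C.card * lengthSeries Γ (descents · ∩ C = ∅) := by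
  rw [growthSeries_eq_sum_lengthSeries C, Finset.sum_congr rfl fun B hB =>
      lengthSeries_descents_inter_eq hC (Finset.mem_powerset.1 hB),
    ← Finset.sum_mul, add_comm, ← Finset.sum_pow_mul_eq_add_pow]
  simp

lemma lengthSeries_subset_descents (hC : Γ.IsClique (C : Set V)) :
    lengthSeries Γ (C ⊆ descents ·) = (X * (1 + X)⁻¹) ^ C.card * growthSeries Γ := by
  have hinv : (1 + X : PowerSeries ℚ)⁻¹ * (1 + X) = 1 := PowerSeries.inv_mul_cancel _ (by simp)
  rw [lengthSeries_congr (q := (descents · ∩ C = C)) fun _ => Finset.inter_eq_right.symm,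
    lengthSeries_descents_inter_eq hC subset_rfl, growthSeries_eq hC]
  conv_rhs =>
    rw [mul_pow, mul_assoc, ← mul_assoc (_⁻¹ ^ _), ← mul_pow, hinv, one_pow, one_mul]

lemma lengthSeries_subset_descents_of_not_isClique (hC : ¬ Γ.IsClique (C : Set V)) :
    lengthSeries Γ (C ⊆ descents ·) = 0 := by
  ext n
  simp only [lengthSeries, coeff_mk, map_zero, Nat.cast_eq_zero, Finset.card_eq_zero,
    Finset.filter_eq_empty_iff]
  exact fun x _ hCx => hC ((isClique_descents x).subset hCx)

lemma sum_neg_one_pow_mul_lengthSeries :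
    ∑ C : Finset V, (-1) ^ C.card * lengthSeries Γ (C ⊆ descents ·) = 1 := by
  have hx (x : RACG Γ) :
      ∑ C : Finset V, (-1 : ℚ) ^ C.card * (if C ⊆ descents x then 1 else 0) =
        if x = 1 then 1 else 0 := by
    have h := congrArg (Int.cast : ℤ → ℚ)
      (Finset.sum_powerset_neg_one_pow_card (x := descents x))
    push_cast at h
    simp_rw [mul_ite, mul_one, mul_zero]
    rw [← Finset.sum_filter, Finset.filter_subset_univ, h]
    simp only [descents_eq_empty_iff]
  have coeff_neg_one_pow_mul (n k : ℕ) (f : PowerSeries ℚ) :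
      coeff n ((-1) ^ k * f) = (-1) ^ k * coeff n f := by
    rw [← map_one (C (R := ℚ)), ← map_neg, ← map_pow, coeff_C_mul]
  ext n
  calc coeff n (∑ C : Finset V, (-1) ^ C.card * lengthSeries Γ (C ⊆ descents ·))
      = ∑ C : Finset V, (-1 : ℚ) ^ C.card *
          ∑ x ∈ sphere Γ n, if C ⊆ descents x then 1 else 0 := by
        simp [coeff_neg_one_pow_mul, lengthSeries, Finset.sum_boole]
    _ = ∑ x ∈ sphere Γ n, if x = 1 then 1 else 0 := by
        simp_rw [Finset.mul_sum]
        rw [Finset.sum_comm]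
        exact Finset.sum_congr rfl fun x _ => hx x
    _ = coeff n 1 := by
        simp [coeff_one, mlen_one, eq_comm]

variable (Γ) in
lemma growthSeries_mul_aeval_cliquePoly :
    growthSeries Γ * Polynomial.aeval (-(X * (1 + X)⁻¹)) (cliquePoly Γ) = 1 := by
  calc growthSeries Γ * Polynomial.aeval (-(X * (1 + X)⁻¹)) (cliquePoly Γ)
      = ∑ C ∈ Finset.univ.filter fun C : Finset V => Γ.IsClique (C : Set V),
          (-1) ^ C.card * lengthSeries Γ (C ⊆ descents ·) := by
        rw [aeval_cliquePoly, Finset.mul_sum]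
        refine Finset.sum_congr rfl fun C hC => ?_
        rw [lengthSeries_subset_descents (Finset.mem_filter.1 hC).2, neg_pow]
        ring
    _ = ∑ C : Finset V, (-1) ^ C.card * lengthSeries Γ (C ⊆ descents ·) :=
        Finset.sum_filter_of_ne fun C _ h => by_contra fun hC =>
          h (by rw [lengthSeries_subset_descents_of_not_isClique hC, mul_zero])
    _ = 1 := sum_neg_one_pow_mul_lengthSeries

end Counting

end RACG

theorem racg_growth_clique_poly {V : Type*} [Fintype V] (Γ : SimpleGraph V) :
    PowerSeries.mk (fun n => (Nat.card {x : RACG Γ // mlen (RACG.gen Γ) x = n} : ℚ)) =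
      (Polynomial.aeval
        (-(PowerSeries.X * (1 + PowerSeries.X : PowerSeries ℚ)⁻¹))
        (cliquePoly Γ))⁻¹ := by
  have key := RACG.growthSeries_mul_aeval_cliquePoly Γ
  have hunit : PowerSeries.constantCoeff (Polynomial.aeval
      (-(PowerSeries.X * (1 + PowerSeries.X : PowerSeries ℚ)⁻¹)) (cliquePoly Γ)) ≠ 0 :=
    right_ne_zero_of_mul_eq_one (by rw [← map_mul, key, map_one])
  exact (PowerSeries.eq_inv_iff_mul_eq_one hunit).2 key
end
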